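/- Connection formula between little q-Laguerre/Wall polynomials: p_n(x; a | q) = ∑_{m=0}^{n} (αq)^{n−m} [n choose m]_q ((α q;q)_m / (a q;q)_n) ((a/α); q)_{n−m} · p_m(x; α | q), where p_n(x; a | q) = {}_2φ_1(q^{−n}, 0; aq; q; qx) = ∑_{j=0}^{n} ((q^{−n};q)_j / ((aq;q)_j (q;q)_j)) (qx)^j. -/

import Mathlib

open Finset

/-- q-shifted factorial. -/
noncomputable def qPoch (a q : ℂ) (n : ℕ) : ℂ :=
  ∏ k ∈ Finset.range n, (1 - a * q ^ k)

/-- Gaussian (q-binomial) coefficient. -/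
noncomputable def qBinom (q : ℂ) (n k : ℕ) : ℂ :=
  qPoch q q n / (qPoch q q k * qPoch q q (n - k))

/-- Little q-Laguerre/Wall polynomial
`p_n(x;a|q) = {}_2φ_1(q^{−n},0;aq;q;qx) = ∑_j ((q^{−n};q)_j/((aq;q)_j (q;q)_j))(qx)^j`. -/
noncomputable def littleQLaguerre (q a x : ℂ) (n : ℕ) : ℂ :=
  ∑ j ∈ Finset.range (n + 1),
    qPoch ((q ^ n)⁻¹) q j / (qPoch (a * q) q j * qPoch q q j) * (q * x) ^ j

/-!
Compare the coefficients of `(q x)^j`. Since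
`(q^{-m};q)_j = (-1)^j q^{j(j-1)/2 - mj} (q;q)_m / (q;q)_{m-j}` for `j ≤ m` and it
vanishes for `m < j`, the identity for a fixed `j ≤ n` becomes, after cancelling common factors and
writing `k = n - m`, the q-Chu–Vandermonde identity
`(A;q)_N = ∑_k [N choose k]_q ∏_{i<k} (B - A q^i) (B;q)_{N-k}` with `N = n - j`, `A = a q^{j+1}`,
`B = α q^{j+1}`; the factor `(α q)^k (a/α;q)_k` is `q^{-jk} ∏_{i<k} (B - A q^i)`.
-/

section QPochhammer

variable {c q : ℂ}

@[simp]
lemma qPoch_zero : qPoch c q 0 = 1 := prod_range_zero _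

lemma qPoch_succ (n : ℕ) : qPoch c q (n + 1) = qPoch c q n * (1 - c * q ^ n) :=
  prod_range_succ _ _

lemma qPoch_add (m n : ℕ) : qPoch c q (m + n) = qPoch c q m * qPoch (c * q ^ m) q n := by
  simp only [qPoch, prod_range_add, pow_add, mul_assoc]

lemma qPoch_ne_zero_of_le {m n : ℕ} (h : qPoch c q n ≠ 0) (hmn : m ≤ n) : qPoch c q m ≠ 0 := by
  obtain ⟨l, rfl⟩ := Nat.exists_eq_add_of_le hmn
  exact left_ne_zero_of_mul (qPoch_add m l ▸ h)

lemma qPoch_mul_pow_ne_zero {m n : ℕ} (h : qPoch c q (m + n) ≠ 0) : qPoch (c * q ^ m) q n ≠ 0 :=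
  right_ne_zero_of_mul (qPoch_add m n ▸ h)

lemma qPoch_self_ne_zero {n : ℕ} (hq : ∀ j, 1 ≤ j → j ≤ n → q ^ j ≠ 1) : qPoch q q n ≠ 0 := by
  refine prod_ne_zero_iff.mpr fun i hi => sub_ne_zero.mpr fun h => ?_
  exact hq (i + 1) (by omega) (by simpa using mem_range.mp hi) (by rw [pow_succ']; exact h.symm)

lemma pow_mul_qPoch_div {β : ℂ} (γ : ℂ) (hβ : β ≠ 0) (n : ℕ) :
    β ^ n * qPoch (γ / β) q n = ∏ i ∈ range n, (β - γ * q ^ i) := by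
  rw [qPoch, ← card_range n, ← prod_const, card_range, ← prod_mul_distrib]
  refine prod_congr rfl fun i _ => ?_
  field_simp

lemma qPoch_inv_pow_eq_zero (hq : q ≠ 0) {m j : ℕ} (h : m < j) : qPoch (q ^ m)⁻¹ q j = 0 :=
  prod_eq_zero (mem_range.mpr h) (by rw [inv_mul_cancel₀ (pow_ne_zero m hq), sub_self])

lemma qPoch_inv_pow_mul (hq : q ≠ 0) {m : ℕ} : ∀ {j : ℕ}, j ≤ m →
    qPoch (q ^ m)⁻¹ q j * qPoch q q (m - j) * q ^ (m * j) = (∏ i ∈ range j, -q ^ i) * qPoch q q m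
  | 0, _ => by simp
  | j + 1, h => by
    have ih := qPoch_inv_pow_mul hq (m := m) (j := j) (by omega)
    obtain ⟨l, hl⟩ : ∃ l, m - j = l + 1 := ⟨m - j - 1, by omega⟩
    have hpow : q ^ m = q ^ j * (q * q ^ l) := by
      rw [← pow_succ', ← pow_add, show j + (l + 1) = m by omega]
    rw [hl, qPoch_succ] at ih
    rw [qPoch_succ, prod_range_succ, show m - (j + 1) = l by omega, mul_add, pow_add, mul_one]
    have hinv : (q ^ m)⁻¹ * q ^ m = 1 := inv_mul_cancel₀ (pow_ne_zero m hq)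
    linear_combination (-q ^ j) * ih + qPoch (q ^ m)⁻¹ q j * qPoch q q l * q ^ (m * j) * hpow
      - qPoch (q ^ m)⁻¹ q j * qPoch q q l * q ^ (m * j) * q ^ j * hinv

lemma qPoch_inv_pow_eq_div (hq : q ≠ 0) {j d : ℕ} (hd : qPoch q q d ≠ 0) :
    qPoch (q ^ (j + d))⁻¹ q j =
      (∏ i ∈ range j, -q ^ i) * qPoch q q (j + d) / (qPoch q q d * q ^ ((j + d) * j)) := by
  rw [eq_div_iff (mul_ne_zero hd (pow_ne_zero _ hq)), ← mul_assoc]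
  simpa using qPoch_inv_pow_mul hq (m := j + d) (j := j) (Nat.le_add_right j d)

end QPochhammer

section GaussBinom

/-- The Gaussian binomial coefficient through the q-Pascal rule; unlike `qBinom` it needs no
nonvanishing of `(q;q)_n` and vanishes for `k > n`. -/
noncomputable def gaussBinom (q : ℂ) : ℕ → ℕ → ℂ
  | _, 0 => 1
  | 0, _ + 1 => 0
  | n + 1, k + 1 => gaussBinom q n (k + 1) + q ^ (n - k) * gaussBinom q n k

variable {q : ℂ}

@[simp]
lemma gaussBinom_zero_right (n : ℕ) : gaussBinom q n 0 = 1 := by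
  cases n <;> rfl

lemma gaussBinom_succ_succ (n k : ℕ) :
    gaussBinom q (n + 1) (k + 1) = gaussBinom q n (k + 1) + q ^ (n - k) * gaussBinom q n k :=
  rfl

lemma gaussBinom_of_lt : ∀ {n k : ℕ}, n < k → gaussBinom q n k = 0
  | 0, _ + 1, _ => rfl
  | n + 1, k + 1, h => by
    rw [gaussBinom_succ_succ, gaussBinom_of_lt (by omega), gaussBinom_of_lt (by omega),
      mul_zero, add_zero]

lemma gaussBinom_mul_qPoch : ∀ {n k : ℕ}, k ≤ n →
    gaussBinom q n k * (qPoch q q k * qPoch q q (n - k)) = qPoch q q n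
  | _, 0, _ => by simp
  | n + 1, k + 1, h => by
    rw [gaussBinom_succ_succ, Nat.add_sub_add_right, qPoch_succ k, qPoch_succ n]
    have hlow := gaussBinom_mul_qPoch (n := n) (k := k) (by omega)
    rcases Nat.lt_or_eq_of_le (Nat.le_of_succ_le_succ h) with hk | rfl
    · have hhigh := gaussBinom_mul_qPoch (n := n) (k := k + 1) hk
      obtain ⟨l, hl⟩ : ∃ l, n - k = l + 1 := ⟨n - k - 1, by omega⟩
      have hpow : q ^ (n - k) * q ^ k = q ^ n := by rw [← pow_add, Nat.sub_add_cancel hk.le]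
      rw [show n - (k + 1) = l by omega, qPoch_succ k] at hhigh
      rw [hl, qPoch_succ] at hlow ⊢
      rw [hl] at hpow
      linear_combination (1 - q * q ^ l) * hhigh + q ^ (l + 1) * (1 - q * q ^ k) * hlow
        - qPoch q q n * q * hpow
    · rw [gaussBinom_of_lt (Nat.lt_succ_self k)]
      simp only [Nat.sub_self, qPoch_zero, pow_zero] at hlow ⊢
      linear_combination (1 - q * q ^ k) * hlow

/-- A terminating q-Chu–Vandermonde identity, in the homogeneous form that allows `B = 0`. -/
lemma qPoch_eq_sum_gaussBinom (A B : ℂ) (N : ℕ) :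
    qPoch A q N = ∑ k ∈ range (N + 1),
      gaussBinom q N k * (∏ i ∈ range k, (B - A * q ^ i)) * qPoch B q (N - k) := by
  induction N with
  | zero => simp
  | succ N ih =>
    set P : ℕ → ℂ := fun k => ∏ i ∈ range k, (B - A * q ^ i)
    have hpascal : ∑ k ∈ range (N + 2), gaussBinom q (N + 1) k * P k * qPoch B q (N + 1 - k) =
        ∑ k ∈ range (N + 1), (gaussBinom q N k * P k * qPoch B q (N + 1 - k)
          + q ^ (N - k) * gaussBinom q N k * P (k + 1) * qPoch B q (N - k)) := by
      have hshift :=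
        sum_range_succ' (fun k => gaussBinom q N k * P k * qPoch B q (N + 1 - k)) (N + 1)
      rw [sum_range_succ, gaussBinom_of_lt (Nat.lt_succ_self N), zero_mul, zero_mul, add_zero]
        at hshift
      rw [sum_add_distrib, hshift, sum_range_succ' _ (N + 1)]
      simp only [gaussBinom_succ_succ, gaussBinom_zero_right, Nat.add_sub_add_right, add_mul,
        sum_add_distrib]
      ring
    rw [hpascal, qPoch_succ, ih, sum_mul]
    refine sum_congr rfl fun k hk => ?_
    obtain ⟨l, rfl⟩ := Nat.exists_eq_add_of_le (Nat.le_of_lt_succ (mem_range.mp hk))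
    have hpow : q ^ l * q ^ k = q ^ (k + l) := by rw [← pow_add, add_comm]
    rw [show k + l + 1 - k = l + 1 by omega, Nat.add_sub_cancel_left, qPoch_succ,
      show P (k + 1) = P k * (B - A * q ^ k) from prod_range_succ _ _]
    linear_combination gaussBinom q (k + l) k * P k * qPoch B q l * A * hpow

end GaussBinom

noncomputable def littleQLaguerreCoeff (q a : ℂ) (n j : ℕ) : ℂ :=
  qPoch ((q ^ n)⁻¹) q j / (qPoch (a * q) q j * qPoch q q j)

noncomputable def connectionCoeff (q a α : ℂ) (n m : ℕ) : ℂ :=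
  (α * q) ^ (n - m) * qBinom q n m * (qPoch (α * q) q m / qPoch (a * q) q n) *
    qPoch (a / α) q (n - m)

section Connection

variable {q a α : ℂ}

lemma littleQLaguerre_eq_sum_range (hq : q ≠ 0) (x : ℂ) {m n : ℕ} (h : m ≤ n) :
    littleQLaguerre q a x m = ∑ j ∈ range (n + 1), littleQLaguerreCoeff q a m j * (q * x) ^ j := by
  refine sum_subset (range_subset_range.mpr (by omega)) fun j _ hj => ?_
  rw [qPoch_inv_pow_eq_zero hq (by simpa using hj), zero_div, zero_mul]

lemma connectionCoeff_mul_littleQLaguerreCoeff (hq : q ≠ 0) (hα0 : α ≠ 0) {j m n : ℕ}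
    (hqn : qPoch q q n ≠ 0) (ha : qPoch (a * q) q n ≠ 0) (hα : qPoch (α * q) q n ≠ 0)
    (hjm : j ≤ m) (hmn : m ≤ n) :
    connectionCoeff q a α n m * littleQLaguerreCoeff q α m j =
      gaussBinom q (n - j) (n - m) *
        (∏ i ∈ range (n - m), (α * q * q ^ j - a * q * q ^ j * q ^ i)) *
        qPoch (α * q * q ^ j) q (n - j - (n - m)) *
        (littleQLaguerreCoeff q a n j / qPoch (a * q * q ^ j) q (n - j)) := by
  obtain ⟨d, rfl⟩ := Nat.exists_eq_add_of_le hjm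
  obtain ⟨k, rfl⟩ := Nat.exists_eq_add_of_le hmn
  simp only [connectionCoeff, littleQLaguerreCoeff, qBinom]
  rw [show j + d + k - (j + d) = k by omega, show j + d + k - j = d + k by omega,
    Nat.add_sub_cancel, add_assoc j d k]
  have hqk : qPoch q q k ≠ 0 := qPoch_ne_zero_of_le hqn (by omega)
  have hqd : qPoch q q d ≠ 0 := qPoch_ne_zero_of_le hqn (by omega)
  have hqdk : qPoch q q (d + k) ≠ 0 := qPoch_ne_zero_of_le hqn (by omega)
  have hqjd : qPoch q q (j + d) ≠ 0 := qPoch_ne_zero_of_le hqn (by omega)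
  have hαj : qPoch (α * q) q j ≠ 0 := qPoch_ne_zero_of_le hα (by omega)
  have haq : qPoch (a * q * q ^ j) q (d + k) ≠ 0 := qPoch_mul_pow_ne_zero (by rwa [← add_assoc])
  have hβ : α * q * q ^ j ≠ 0 := by simp [hα0, hq]
  have hgauss : gaussBinom q (d + k) k = qPoch q q (d + k) / (qPoch q q k * qPoch q q d) := by
    rw [eq_div_iff (mul_ne_zero hqk hqd)]
    simpa using gaussBinom_mul_qPoch (q := q) (Nat.le_add_left k d)
  rw [← pow_mul_qPoch_div _ hβ, show a * q * q ^ j / (α * q * q ^ j) = a / α by field_simp, hgauss]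
  simp only [qPoch_inv_pow_eq_div hq hqd, qPoch_inv_pow_eq_div hq hqdk, qPoch_add (c := α * q) j d,
    qPoch_add (c := a * q) j (d + k)]
  field_simp
  ring

lemma littleQLaguerreCoeff_eq_sum (hq : q ≠ 0) (hα0 : α ≠ 0) {j n : ℕ}
    (hqn : qPoch q q n ≠ 0) (ha : qPoch (a * q) q n ≠ 0) (hα : qPoch (α * q) q n ≠ 0)
    (hjn : j ≤ n) :
    littleQLaguerreCoeff q a n j =
      ∑ m ∈ range (n + 1), connectionCoeff q a α n m * littleQLaguerreCoeff q α m j := by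
  have hlow : ∑ m ∈ range j, connectionCoeff q a α n m * littleQLaguerreCoeff q α m j = 0 :=
    sum_eq_zero fun m hm => by
      rw [littleQLaguerreCoeff, qPoch_inv_pow_eq_zero hq (mem_range.mp hm), zero_div, mul_zero]
  have hhigh : ∀ m ∈ Ico j (n + 1), connectionCoeff q a α n m * littleQLaguerreCoeff q α m j =
      gaussBinom q (n - j) (n - m) *
        (∏ i ∈ range (n - m), (α * q * q ^ j - a * q * q ^ j * q ^ i)) *
        qPoch (α * q * q ^ j) q (n - j - (n - m)) *
        (littleQLaguerreCoeff q a n j / qPoch (a * q * q ^ j) q (n - j)) := fun m hm => by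
    rw [mem_Ico] at hm
    exact connectionCoeff_mul_littleQLaguerreCoeff hq hα0 hqn ha hα hm.1 (by omega)
  have haq : qPoch (a * q * q ^ j) q (n - j) ≠ 0 :=
    qPoch_mul_pow_ne_zero (by rwa [Nat.add_sub_cancel' hjn])
  rw [← sum_range_add_sum_Ico _ (by omega : j ≤ n + 1), hlow, zero_add, sum_congr rfl hhigh,
    sum_Ico_reflect (fun k => gaussBinom q (n - j) k *
      (∏ i ∈ range k, (α * q * q ^ j - a * q * q ^ j * q ^ i)) *
      qPoch (α * q * q ^ j) q (n - j - k) *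
      (littleQLaguerreCoeff q a n j / qPoch (a * q * q ^ j) q (n - j))) j le_rfl,
    Nat.sub_self, ← range_eq_Ico, show n + 1 - j = n - j + 1 by omega, ← sum_mul,
    ← qPoch_eq_sum_gaussBinom, mul_div_cancel₀ _ haq]

end Connection

/-- connection formula between little q-Laguerre/Wall polynomials:
`p_n(x;a|q) = ∑_m (αq)^{n−m} [n choose m]_q ((αq;q)_m/(aq;q)_n) (a/α;q)_{n−m} p_m(x;α|q)`. -/
theorem littleQLaguerre_connection (q a α : ℂ) (n : ℕ)
    (hq0 : q ≠ 0) (hq1 : ∀ j, 1 ≤ j → j ≤ n → q ^ j ≠ 1)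
    (ha : qPoch (a * q) q n ≠ 0) (hα : qPoch (α * q) q n ≠ 0) (hα0 : α ≠ 0) (x : ℂ) :
    littleQLaguerre q a x n = ∑ m ∈ Finset.range (n + 1),
      (α * q) ^ (n - m) * qBinom q n m * (qPoch (α * q) q m / qPoch (a * q) q n) *
        qPoch (a / α) q (n - m) * littleQLaguerre q α x m := by
  have hqn : qPoch q q n ≠ 0 := qPoch_self_ne_zero hq1
  calc littleQLaguerre q a x n
      = ∑ j ∈ range (n + 1), littleQLaguerreCoeff q a n j * (q * x) ^ j := rfl
    _ = ∑ j ∈ range (n + 1), ∑ m ∈ range (n + 1),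
          connectionCoeff q a α n m * (littleQLaguerreCoeff q α m j * (q * x) ^ j) := by
        refine sum_congr rfl fun j hj => ?_
        rw [littleQLaguerreCoeff_eq_sum hq0 hα0 hqn ha hα (Nat.le_of_lt_succ (mem_range.mp hj)),
          sum_mul]
        exact sum_congr rfl fun m _ => mul_assoc _ _ _
    _ = ∑ m ∈ range (n + 1), connectionCoeff q a α n m * littleQLaguerre q α x m := by
        rw [sum_comm]
        refine sum_congr rfl fun m hm => ?_
        rw [← mul_sum, littleQLaguerre_eq_sum_range hq0 x (Nat.le_of_lt_succ (mem_range.mp hm))]
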